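/- For every pseudo-Boolean function f: {0,1}^n → ℝ and every S ⊆ N, the Banzhaf influence index satisfies Φ_B(f,S) = ⟨f, g_S⟩, where g_S(x) = 2^{|S|}(Π_{i∈S} x_i − Π_{i∈S}(1−x_i)) and ⟨f,g⟩ = 2^{-n} Σ_{x∈{0,1}^n} f(x)g(x). -/

import Mathlib

open Finset

/-!
In `g_S` the two products are the indicators of `S ⊆ X` and of `S ∩ X = ∅`. The supersets of `S`
are exactly the sets `T ∪ S` with `T ⊆ N ∖ S`, and the sets disjoint from `S` are exactly the
`T ⊆ N ∖ S`, so `⟨f, g_S⟩ = 2^{-n} 2^{|S|} Σ_{T ⊆ N∖S} (f(T ∪ S) − f(T))`, which is `Φ_B(f,S)`.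
-/

/-- The Banzhaf influence index `Φ_B(f,S) = 2^{-(n-|S|)} Σ_{T⊆N∖S} (f(T∪S) − f(T))`. -/
noncomputable def banzhafInfluence {n : ℕ} (f : Finset (Fin n) → ℝ) (S : Finset (Fin n)) : ℝ :=
  (1 / 2 ^ (n - S.card)) * ∑ T ∈ (univ \ S).powerset, (f (T ∪ S) - f T)

namespace Finset

variable {α : Type*} [DecidableEq α]

lemma prod_ite_mem_one_zero {R : Type*} [CommMonoidWithZero R] (S X : Finset α) :
    ∏ i ∈ S, (if i ∈ X then (1 : R) else 0) = if S ⊆ X then 1 else 0 := by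
  rw [prod_boole]; rfl

lemma prod_one_sub_ite_mem {R : Type*} [CommRing R] (S X : Finset α) :
    ∏ i ∈ S, (1 - if i ∈ X then (1 : R) else 0) = if Disjoint S X then 1 else 0 := by
  have h (i : α) : (1 - if i ∈ X then (1 : R) else 0) = if i ∉ X then 1 else 0 := by
    split_ifs <;> simp_all
  simp_rw [h, prod_boole, disjoint_left]

variable [Fintype α]

lemma filter_disjoint_univ_eq_powerset_compl (S : Finset α) :
    ({X | Disjoint S X} : Finset (Finset α)) = (univ \ S).powerset := by
  ext X
  simp only [mem_filter, mem_univ, true_and, mem_powerset, subset_sdiff, subset_univ,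
    disjoint_comm]

lemma sum_filter_superset_eq_sum_powerset_compl {M : Type*} [AddCommMonoid M]
    (f : Finset α → M) (S : Finset α) :
    ∑ X with S ⊆ X, f X = ∑ T ∈ (univ \ S).powerset, f (T ∪ S) := by
  have hIcc : ({X | S ⊆ X} : Finset (Finset α)) = Icc S univ := by ext; simp
  rw [hIcc, Icc_eq_image_powerset (subset_univ S), sum_image]
  · simp_rw [union_comm]
  · intro T hT U hU hTU
    rw [mem_coe, mem_powerset, subset_sdiff] at hT hU
    simpa [union_sdiff_cancel_left hT.2.symm, union_sdiff_cancel_left hU.2.symm] using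
      congrArg (· \ S) hTU

lemma sum_mul_ite_subset_sub_ite_disjoint {R : Type*} [CommRing R] (f : Finset α → R)
    (S : Finset α) :
    ∑ X, f X * ((if S ⊆ X then 1 else 0) - if Disjoint S X then 1 else 0)
      = ∑ T ∈ (univ \ S).powerset, (f (T ∪ S) - f T) := by
  simp only [mul_sub, mul_boole, sum_sub_distrib, ← sum_filter,
    sum_filter_superset_eq_sum_powerset_compl]
  rw [filter_disjoint_univ_eq_powerset_compl]

end Finset

/-- `Φ_B(f,S) = ⟨f, g_S⟩` where
`g_S(x) = 2^{|S|}(Π_{i∈S} x_i − Π_{i∈S}(1−x_i))` and `⟨f,g⟩ = 2^{-n} Σ_x f(x)g(x)`. -/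
theorem banzhafInfluence_eq_inner (n : ℕ) (f : Finset (Fin n) → ℝ) (S : Finset (Fin n)) :
    banzhafInfluence f S
      = (1 / 2 ^ n) * ∑ X : Finset (Fin n),
          f X * (2 ^ S.card *
            ((∏ i ∈ S, (if i ∈ X then (1 : ℝ) else 0))
              - ∏ i ∈ S, (1 - (if i ∈ X then (1 : ℝ) else 0)))) := by
  have hn : (2 : ℝ) ^ n = 2 ^ (n - S.card) * 2 ^ S.card := by
    rw [← pow_add, Nat.sub_add_cancel (card_le_univ S |>.trans_eq (Fintype.card_fin n))]
  simp_rw [prod_ite_mem_one_zero, prod_one_sub_ite_mem, mul_left_comm (f _), ← mul_sum,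
    sum_mul_ite_subset_sub_ite_disjoint, banzhafInfluence, hn]
  field_simp
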